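/- arXiv:2504.02427 — 2 statements merged into one kernel-verified Lean document; each statement's English description precedes it below -/
import Mathlib

section
/- Let N ≥ 1 and let π : A → B be a surjective map between nonempty finite sets, with a fixed section 𝔰 of π. Let μ and ρ be probability measures on {0,...,N}^A. Assume: (i) μ is a π-lift; (ii) condition A_ρ: if Z ~ ρ and, for each b ∈ B, W_b denotes (Z_c : π(c) ≠ b), then for every b, every a ∈ π⁻¹(b), and every positive-probability event H in σ(W_b), the conditional law of Z_{𝔰(b)} given H is stochastically dominated by the conditional law of Z_a given H; (iii) condition B_μ^ρ: if Y ~ μ, X_b := max_{a∈π⁻¹(b)} Y_a, and Y'_a := X_{π(a)} · 1[𝔰(π(a)) = a], then the law of Y' is stochastically dominated by ρ. Then μ is stochastically dominated by ρ. -/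
/-!
By Strassen's theorem on a finite poset it suffices to show `μ U ≤ ρ U` for every upper set `U`;
Strassen's theorem itself is the supply–demand form of Hall's theorem, proved by moving as much
mass as Hall's condition allows along one edge: then a support point is exhausted, or some set
becomes tight and the problem splits along it.

A configuration with at most one nonzero entry per fibre is recovered from its flattening by
moving each fibre maximum from `𝔰 b` to the position `r b` where it sits. Hence, up to a μ-null
set, `U` lies in the preimage under flattening of the event "for some section `r`, the values of
`z` read at `𝔰` and placed at `r` form a point of `U`", and condition B bounds `μ U` by the
ρ-probability of that event. The reading position is then switched from `𝔰 b` to `r b` one fibre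
at a time, which condition A shows cannot decrease the probability. Once every fibre is read at
`r`, the placed configuration lies below `z`, so the event is contained in `U`.
-/

open MeasureTheory ProbabilityTheory

/-- `μ` is stochastically dominated by `ν`. -/
def StochDom {E : Type*} [MeasurableSpace E] [Preorder E] (μ ν : Measure E) : Prop :=
  ∃ κ : Measure (E × E), IsProbabilityMeasure κ ∧ κ.map Prod.fst = μ ∧
    κ.map Prod.snd = ν ∧ κ {q | q.1 ≤ q.2} = 1

open scoped NNReal ENNReal
open Finset

section NNRealFunctions

variable {γ : Type*} {φ ψ : γ → ℝ≥0}

lemma card_ne_zero_le [Fintype γ] (h : ψ ≤ φ) : #{y | ψ y ≠ 0} ≤ #{y | φ y ≠ 0} :=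
  card_le_card <| monotone_filter_right _ fun y _ hy => ne_bot_of_le_ne_bot hy (h y)

lemma card_ne_zero_lt [Fintype γ] (h : ψ ≤ φ) {c : γ} (hφ : φ c ≠ 0) (hψ : ψ c = 0) :
    #{y | ψ y ≠ 0} < #{y | φ y ≠ 0} :=
  card_lt_card <| (ssubset_iff_of_subset (monotone_filter_right _ fun y _ hy =>
    ne_bot_of_le_ne_bot hy (h y))).2 ⟨c, by simpa using hφ, by simp [hψ]⟩

variable [DecidableEq γ]

lemma single_le_of_le {c : γ} {t : ℝ≥0} (hc : t ≤ φ c) : Pi.single c t ≤ φ := fun y => by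
  rcases eq_or_ne y c with rfl | hy
  · simpa using hc
  · simp [hy]

lemma sum_sub_single_add {c : γ} {t : ℝ≥0} (hc : t ≤ φ c) (s : Finset γ) :
    ∑ y ∈ s, (φ - Pi.single c t : γ → ℝ≥0) y + (if c ∈ s then t else 0) = ∑ y ∈ s, φ y := by
  rw [← sum_pi_single' c t s, ← sum_add_distrib]
  exact sum_congr rfl fun y _ => tsub_add_cancel_of_le (single_le_of_le hc y)

lemma piecewise_zero_right_le (s : Finset γ) (φ : γ → ℝ≥0) : s.piecewise φ 0 ≤ φ :=
  s.piecewise_le_of_le_of_le le_rfl fun _ => zero_le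

lemma piecewise_zero_left_le (s : Finset γ) (φ : γ → ℝ≥0) : s.piecewise (0 : γ → ℝ≥0) φ ≤ φ :=
  s.piecewise_le_of_le_of_le (fun _ => zero_le) le_rfl

lemma piecewise_zero_add_piecewise_zero (s : Finset γ) (φ : γ → ℝ≥0) :
    s.piecewise φ 0 + s.piecewise (0 : γ → ℝ≥0) φ = φ := by
  ext y
  by_cases hy : y ∈ s <;> simp [hy]

end NNRealFunctions

section SupplyDemand

variable {α β : Type*} [Fintype β]

open Classical in
noncomputable def relImage (r : α → β → Prop) (S : Finset α) : Finset β :=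
  {z | ∃ x ∈ S, r x z}

def HallCondition (r : α → β → Prop) (f : α → ℝ≥0) (g : β → ℝ≥0) : Prop :=
  ∀ S : Finset α, ∑ x ∈ S, f x ≤ ∑ z ∈ relImage r S, g z

structure IsTransportPlan [Fintype α] (r : α → β → Prop) (f : α → ℝ≥0) (g : β → ℝ≥0)
    (K : α → β → ℝ≥0) : Prop where
  sum_row : ∀ x, ∑ z, K x z = f x
  sum_col : ∀ z, ∑ x, K x z = g z
  rel_of_ne_zero : ∀ x z, K x z ≠ 0 → r x z

variable {r : α → β → Prop} {f : α → ℝ≥0} {g : β → ℝ≥0}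

lemma mem_relImage {S : Finset α} {z : β} : z ∈ relImage r S ↔ ∃ x ∈ S, r x z := by
  simp [relImage]

lemma relImage_mono {S T : Finset α} (h : S ⊆ T) : relImage r S ⊆ relImage r T := fun _ hz =>
  let ⟨x, hx, hxz⟩ := mem_relImage.1 hz
  mem_relImage.2 ⟨x, h hx, hxz⟩

lemma HallCondition.exists_rel_ne_zero (hfg : HallCondition r f g) {x : α} (hx : f x ≠ 0) :
    ∃ z, r x z ∧ g z ≠ 0 := by
  obtain ⟨z, hz, hgz⟩ :=
    exists_ne_zero_of_sum_ne_zero (ne_bot_of_le_ne_bot hx (by simpa using hfg {x}))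
  obtain ⟨x', hx', hxz⟩ := mem_relImage.1 hz
  exact ⟨z, mem_singleton.1 hx' ▸ hxz, hgz⟩

section Plans

variable [Fintype α]

lemma isTransportPlan_zero : IsTransportPlan r 0 0 0 :=
  ⟨fun _ => by simp, fun _ => by simp, fun _ _ h => absurd rfl h⟩

lemma IsTransportPlan.add {f₁ f₂ : α → ℝ≥0} {g₁ g₂ : β → ℝ≥0} {K₁ K₂ : α → β → ℝ≥0}
    (h₁ : IsTransportPlan r f₁ g₁ K₁) (h₂ : IsTransportPlan r f₂ g₂ K₂) :
    IsTransportPlan r (f₁ + f₂) (g₁ + g₂) (K₁ + K₂) where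
  sum_row x := by simp [sum_add_distrib, h₁.sum_row, h₂.sum_row]
  sum_col z := by simp [sum_add_distrib, h₁.sum_col, h₂.sum_col]
  rel_of_ne_zero x z hK := by
    by_cases h : K₁ x z = 0
    · exact h₂.rel_of_ne_zero x z (by simpa [h] using hK)
    · exact h₁.rel_of_ne_zero x z h

variable [DecidableEq α] [DecidableEq β]

lemma isTransportPlan_single {x₀ : α} {z₀ : β} (h : r x₀ z₀) (t : ℝ≥0) :
    IsTransportPlan r (Pi.single x₀ t) (Pi.single z₀ t) (Pi.single x₀ (Pi.single z₀ t)) where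
  sum_row x := by
    rcases eq_or_ne x x₀ with rfl | hx
    · simp
    · simp [hx]
  sum_col z := by
    rw [← Finset.sum_apply, Finset.sum_pi_single', if_pos (mem_univ _)]
  rel_of_ne_zero x z hK := by
    rcases eq_or_ne x x₀ with rfl | hx
    · rcases eq_or_ne z z₀ with rfl | hz
      · exact h
      · simp [hz] at hK
    · simp [hx] at hK

lemma IsTransportPlan.add_single {x₀ : α} {z₀ : β} (h : r x₀ z₀) {t : ℝ≥0} (hf : t ≤ f x₀)
    (hg : t ≤ g z₀) {K : α → β → ℝ≥0}
    (hK : IsTransportPlan r (f - Pi.single x₀ t) (g - Pi.single z₀ t) K) :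
    IsTransportPlan r f g (K + Pi.single x₀ (Pi.single z₀ t)) := by
  simpa only [tsub_add_cancel_of_le (single_le_of_le hf),
    tsub_add_cancel_of_le (single_le_of_le hg)] using hK.add (isTransportPlan_single h t)

end Plans

variable [DecidableEq α] [DecidableEq β]

lemma relImage_union_subset (S T : Finset α) :
    relImage r (S ∪ T) ⊆ relImage r S ∪ relImage r T := fun _ hz => by
  obtain ⟨x, hx, hxz⟩ := mem_relImage.1 hz
  rcases mem_union.1 hx with hx | hx
  exacts [mem_union_left _ (mem_relImage.2 ⟨x, hx, hxz⟩),
    mem_union_right _ (mem_relImage.2 ⟨x, hx, hxz⟩)]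

lemma HallCondition.piecewise_inside (hfg : HallCondition r f g) (S : Finset α) :
    HallCondition r (S.piecewise f 0) ((relImage r S).piecewise g 0) := fun T => by
  simp only [sum_piecewise, Pi.zero_apply, sum_const_zero, add_zero]
  calc ∑ x ∈ T ∩ S, f x ≤ ∑ z ∈ relImage r (T ∩ S), g z := hfg _
    _ ≤ ∑ z ∈ relImage r T ∩ relImage r S, g z := sum_le_sum_of_subset <|
      subset_inter (relImage_mono inter_subset_left) (relImage_mono inter_subset_right)

lemma HallCondition.piecewise_outside (hfg : HallCondition r f g) {S : Finset α}
    (hS : ∑ z ∈ relImage r S, g z ≤ ∑ x ∈ S, f x) :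
    HallCondition r (S.piecewise 0 f) ((relImage r S).piecewise 0 g) := fun T => by
  simp only [sum_piecewise, Pi.zero_apply, sum_const_zero, zero_add]
  refine le_of_add_le_add_right (a := ∑ x ∈ S, f x) ?_
  calc ∑ x ∈ T \ S, f x + ∑ x ∈ S, f x = ∑ x ∈ T ∪ S, f x := by
        rw [← union_sdiff_right, sum_sdiff subset_union_right]
    _ ≤ ∑ z ∈ relImage r (T ∪ S), g z := hfg _
    _ ≤ ∑ z ∈ relImage r T ∪ relImage r S, g z :=
        sum_le_sum_of_subset (relImage_union_subset _ _)
    _ = ∑ z ∈ relImage r T \ relImage r S, g z + ∑ z ∈ relImage r S, g z := by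
        rw [← union_sdiff_right, sum_sdiff subset_union_right]
    _ ≤ ∑ z ∈ relImage r T \ relImage r S, g z + ∑ x ∈ S, f x := by gcongr

lemma HallCondition.sub_single (hfg : HallCondition r f g) {x₀ : α} {z₀ : β} (hr : r x₀ z₀)
    {t : ℝ≥0} (hf : t ≤ f x₀) (hg : t ≤ g z₀)
    (hslack : ∀ T, x₀ ∉ T → z₀ ∈ relImage r T → ∑ x ∈ T, f x + t ≤ ∑ z ∈ relImage r T, g z) :
    HallCondition r (f - Pi.single x₀ t) (g - Pi.single z₀ t) := fun T => by
  have hT := hfg T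
  rw [← sum_sub_single_add hf, ← sum_sub_single_add hg] at hT
  by_cases hx : x₀ ∈ T
  · have hz : z₀ ∈ relImage r T := mem_relImage.2 ⟨x₀, hx, hr⟩
    rw [if_pos hx, if_pos hz] at hT
    exact le_of_add_le_add_right hT
  by_cases hz : z₀ ∈ relImage r T
  · have := hslack T hx hz
    rw [← sum_sub_single_add hf, ← sum_sub_single_add hg, if_neg hx, if_pos hz, add_zero] at this
    exact le_of_add_le_add_right this
  · simpa [hx, hz] using hT

lemma sum_relImage_sub_single_eq {x₀ : α} {z₀ : β} {t : ℝ≥0} (hf : t ≤ f x₀) (hg : t ≤ g z₀)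
    {T : Finset α} (hx : x₀ ∉ T) (hz : z₀ ∈ relImage r T)
    (hT : ∑ x ∈ T, f x + t = ∑ z ∈ relImage r T, g z) :
    ∑ z ∈ relImage r T, (g - Pi.single z₀ t : β → ℝ≥0) z =
      ∑ x ∈ T, (f - Pi.single x₀ t : α → ℝ≥0) x := by
  have hTf := sum_sub_single_add hf T
  have hTg := sum_sub_single_add hg (relImage r T)
  rw [if_neg hx, add_zero] at hTf
  rw [if_pos hz] at hTg
  rw [hTf]
  exact add_right_cancel (hTg.trans hT.symm)

variable [Fintype α]

lemma HallCondition.exists_transfer (hfg : HallCondition r f g) (x₀ : α) (z₀ : β) :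
    ∃ t ≤ f x₀, t ≤ g z₀ ∧
      (∀ T, x₀ ∉ T → z₀ ∈ relImage r T → ∑ x ∈ T, f x + t ≤ ∑ z ∈ relImage r T, g z) ∧
      (t = f x₀ ∨ t = g z₀ ∨
        ∃ T, x₀ ∉ T ∧ z₀ ∈ relImage r T ∧ ∑ x ∈ T, f x + t = ∑ z ∈ relImage r T, g z) := by
  -- the largest amount movable from `x₀` to `z₀` without breaking Hall's condition
  set slack : Finset α → ℝ≥0 := fun T => ∑ z ∈ relImage r T, g z - ∑ x ∈ T, f x
  have hslack T : ∑ x ∈ T, f x + slack T = ∑ z ∈ relImage r T, g z :=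
    add_tsub_cancel_of_le (hfg T)
  set candidates := insert (f x₀) (insert (g z₀)
    (({T | x₀ ∉ T ∧ z₀ ∈ relImage r T} : Finset (Finset α)).image slack))
  have hne : candidates.Nonempty := insert_nonempty _ _
  refine ⟨candidates.min' hne, min'_le _ _ (mem_insert_self _ _),
    min'_le _ _ (mem_insert_of_mem (mem_insert_self _ _)), fun T hx hz => ?_, ?_⟩
  · rw [← hslack T]
    gcongr
    exact min'_le _ _ <| mem_insert_of_mem <| mem_insert_of_mem <|
      mem_image.2 ⟨T, by simp [hx, hz], rfl⟩
  · rcases mem_insert.1 (min'_mem _ hne) with h | h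
    · exact Or.inl h
    rcases mem_insert.1 h with h | h
    · exact Or.inr (Or.inl h)
    obtain ⟨T, hT, hTeq⟩ := mem_image.1 h
    rw [mem_filter] at hT
    exact Or.inr (Or.inr ⟨T, hT.2.1, hT.2.2, by rw [← hTeq, hslack]⟩)

lemma exists_isTransportPlan_of_tight (hfg : HallCondition r f g) (hsum : ∑ x, f x = ∑ z, g z)
    (ih : ∀ f' g', HallCondition r f' g' → ∑ x, f' x = ∑ z, g' z →
      #{x | f' x ≠ 0} + #{z | g' z ≠ 0} < #{x | f x ≠ 0} + #{z | g z ≠ 0} →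
        ∃ K, IsTransportPlan r f' g' K)
    {S : Finset α} (hS : ∑ z ∈ relImage r S, g z ≤ ∑ x ∈ S, f x) {x₀ : α} {z₀ : β}
    (hx₀ : x₀ ∉ S) (hfx₀ : f x₀ ≠ 0) (hz₀ : z₀ ∈ relImage r S) (hgz₀ : g z₀ ≠ 0) :
    ∃ K, IsTransportPlan r f g K := by
  have hS' : ∑ x ∈ S, f x = ∑ z ∈ relImage r S, g z := le_antisymm (hfg S) hS
  obtain ⟨x₁, hx₁, hfx₁⟩ : ∃ x ∈ S, f x ≠ 0 := by
    by_contra! h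
    exact hgz₀ (sum_eq_zero_iff.1 (hS'.symm.trans (sum_eq_zero h)) z₀ hz₀)
  have hsum_in : ∑ x, S.piecewise f 0 x = ∑ z, (relImage r S).piecewise g 0 z := by
    simpa [sum_piecewise] using hS'
  have hsum_out : ∑ x, S.piecewise (0 : α → ℝ≥0) f x =
      ∑ z, (relImage r S).piecewise (0 : β → ℝ≥0) g z := by
    simp only [sum_piecewise, Pi.zero_apply, sum_const_zero, zero_add]
    refine add_right_cancel (b := ∑ x ∈ S, f x) ?_
    rw [sum_sdiff (subset_univ _), hsum, hS', sum_sdiff (subset_univ _)]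
  obtain ⟨K₁, hK₁⟩ := ih _ _ (hfg.piecewise_inside S) hsum_in <| add_lt_add_of_lt_of_le
    (card_ne_zero_lt (piecewise_zero_right_le S f) hfx₀ (S.piecewise_eq_of_notMem _ _ hx₀))
    (card_ne_zero_le (piecewise_zero_right_le _ g))
  obtain ⟨K₂, hK₂⟩ := ih _ _ (hfg.piecewise_outside hS) hsum_out <| add_lt_add_of_lt_of_le
    (card_ne_zero_lt (piecewise_zero_left_le S f) hfx₁ (S.piecewise_eq_of_mem _ _ hx₁))
    (card_ne_zero_le (piecewise_zero_left_le _ g))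
  refine ⟨K₁ + K₂, ?_⟩
  simpa only [piecewise_zero_add_piecewise_zero] using hK₁.add hK₂

lemma HallCondition.exists_isTransportPlan_of_forall_lt (hfg : HallCondition r f g)
    (hsum : ∑ x, f x = ∑ z, g z)
    (ih : ∀ f' g', HallCondition r f' g' → ∑ x, f' x = ∑ z, g' z →
      #{x | f' x ≠ 0} + #{z | g' z ≠ 0} < #{x | f x ≠ 0} + #{z | g z ≠ 0} →
        ∃ K, IsTransportPlan r f' g' K) :
    ∃ K, IsTransportPlan r f g K := by
  by_cases hf0 : f = 0
  · have hg0 : g = 0 := funext fun z =>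
      sum_eq_zero_iff.1 (hsum.symm.trans (by simp [hf0])) z (mem_univ z)
    exact ⟨0, hf0 ▸ hg0 ▸ isTransportPlan_zero⟩
  obtain ⟨x₀, hx₀⟩ := Function.ne_iff.1 hf0
  obtain ⟨z₀, hr, hz₀⟩ := hfg.exists_rel_ne_zero hx₀
  obtain ⟨t, htf, htg, hslack, hcases⟩ := hfg.exists_transfer x₀ z₀
  set F := f - Pi.single x₀ t
  set G := g - Pi.single z₀ t
  have hFG : HallCondition r F G := hfg.sub_single hr htf htg hslack
  have hsumFG : ∑ x, F x = ∑ z, G z := by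
    have hf := sum_sub_single_add htf univ
    have hg := sum_sub_single_add htg univ
    rw [if_pos (mem_univ _)] at hf hg
    exact add_right_cancel (hf.trans (hsum.trans hg.symm))
  suffices ∃ K, IsTransportPlan r F G K from
    let ⟨_, hK⟩ := this; ⟨_, hK.add_single hr htf htg⟩
  have hF : F ≤ f := tsub_le_self
  have hG : G ≤ g := tsub_le_self
  by_cases hFx₀ : F x₀ = 0
  · exact ih F G hFG hsumFG
      (add_lt_add_of_lt_of_le (card_ne_zero_lt hF hx₀ hFx₀) (card_ne_zero_le hG))
  by_cases hGz₀ : G z₀ = 0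
  · exact ih F G hFG hsumFG
      (add_lt_add_of_le_of_lt (card_ne_zero_le hF) (card_ne_zero_lt hG hz₀ hGz₀))
  rcases hcases with rfl | rfl | ⟨T, hxT, hzT, hT⟩
  · simp [F] at hFx₀
  · simp [G] at hGz₀
  refine exists_isTransportPlan_of_tight hFG hsumFG (fun f' g' h₁ h₂ hlt => ih f' g' h₁ h₂ ?_)
    (sum_relImage_sub_single_eq htf htg hxT hzT hT).le hxT hFx₀ hzT hGz₀
  exact hlt.trans_le (add_le_add (card_ne_zero_le hF) (card_ne_zero_le hG))

theorem HallCondition.exists_isTransportPlan (hfg : HallCondition r f g)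
    (hsum : ∑ x, f x = ∑ z, g z) : ∃ K, IsTransportPlan r f g K := by
  induction hn : #{x | f x ≠ 0} + #{z | g z ≠ 0} using Nat.strong_induction_on
    generalizing f g with
  | _ n ih =>
    subst hn
    exact hfg.exists_isTransportPlan_of_forall_lt hsum fun f' g' h₁ h₂ hlt =>
      ih _ hlt h₁ h₂ rfl

end SupplyDemand

section DiracSums

variable {α β : Type*} [MeasurableSpace α] [MeasurableSpace β] [Fintype α] [Fintype β]

lemma map_fst_sum_smul_dirac (K : α → β → ℝ≥0∞) :
    (Measure.sum fun p : α × β => K p.1 p.2 • Measure.dirac p).map Prod.fst =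
      Measure.sum fun x => (∑ z, K x z) • Measure.dirac x := by
  rw [Measure.map_sum measurable_fst.aemeasurable]
  simp only [Measure.map_smul, Measure.map_dirac' measurable_fst, Measure.sum_fintype,
    Fintype.sum_prod_type, Finset.sum_smul]

lemma map_snd_sum_smul_dirac (K : α → β → ℝ≥0∞) :
    (Measure.sum fun p : α × β => K p.1 p.2 • Measure.dirac p).map Prod.snd =
      Measure.sum fun z => (∑ x, K x z) • Measure.dirac z := by
  rw [Measure.map_sum measurable_snd.aemeasurable]
  simp only [Measure.map_smul, Measure.map_dirac' measurable_snd, Measure.sum_fintype,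
    Fintype.sum_prod_type_right, Finset.sum_smul]

end DiracSums

section StochasticDomination

variable {E : Type*} [MeasurableSpace E] [MeasurableSingletonClass E] [Preorder E]

lemma StochDom.measure_le_of_isUpperSet [Countable E] {μ ν : Measure E} (h : StochDom μ ν)
    {U : Set E} (hU : IsUpperSet U) : μ U ≤ ν U := by
  obtain ⟨κ, hκ, rfl, rfl, hle⟩ := h
  rw [Measure.map_apply measurable_fst .of_discrete, Measure.map_apply measurable_snd .of_discrete,
    ← measure_inter_conull ((prob_compl_eq_zero_iff .of_discrete).2 hle)]
  exact measure_mono fun q ⟨hq, hq'⟩ => hU hq' hq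

variable [Fintype E]

lemma stochDom_of_isTransportPlan {μ ν : Measure E} [IsProbabilityMeasure μ] [IsFiniteMeasure ν]
    {K : E → E → ℝ≥0}
    (hK : IsTransportPlan (· ≤ ·) (fun x => (μ {x}).toNNReal) (fun z => (ν {z}).toNNReal) K) :
    StochDom μ ν := by
  have hfst : (Measure.sum fun p : E × E => (K p.1 p.2 : ℝ≥0∞) • Measure.dirac p).map Prod.fst
      = μ := by
    rw [map_fst_sum_smul_dirac (fun x z => (K x z : ℝ≥0∞)), ← Measure.sum_smul_dirac μ]
    congr 1; funext x
    rw [← ENNReal.ofNNReal_finsetSum, hK.sum_row, ENNReal.coe_toNNReal (measure_ne_top μ _)]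
  have hsnd : (Measure.sum fun p : E × E => (K p.1 p.2 : ℝ≥0∞) • Measure.dirac p).map Prod.snd
      = ν := by
    rw [map_snd_sum_smul_dirac (fun x z => (K x z : ℝ≥0∞)), ← Measure.sum_smul_dirac ν]
    congr 1; funext z
    rw [← ENNReal.ofNNReal_finsetSum, hK.sum_col, ENNReal.coe_toNNReal (measure_ne_top ν _)]
  have hκ : IsProbabilityMeasure
      (Measure.sum fun p : E × E => (K p.1 p.2 : ℝ≥0∞) • Measure.dirac p) :=
    ⟨by simpa [Measure.map_apply measurable_fst .univ] using congrArg (· .univ) hfst⟩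
  refine ⟨_, hκ, hfst, hsnd, (prob_compl_eq_zero_iff .of_discrete).1 ?_⟩
  rw [Measure.sum_apply _ .of_discrete, ENNReal.tsum_eq_zero]
  intro p
  by_cases hp : p.1 ≤ p.2
  · simp [Measure.dirac_apply, hp]
  · simp [not_imp_comm.1 (hK.rel_of_ne_zero p.1 p.2) hp]

theorem stochDom_of_forall_isUpperSet {μ ν : Measure E} [IsProbabilityMeasure μ]
    [IsProbabilityMeasure ν] (h : ∀ U, IsUpperSet U → μ U ≤ ν U) : StochDom μ ν := by
  classical
  set f : E → ℝ≥0 := fun x => (μ {x}).toNNReal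
  set g : E → ℝ≥0 := fun z => (ν {z}).toNNReal
  have hf (s : Finset E) : ((∑ x ∈ s, f x : ℝ≥0) : ℝ≥0∞) = μ s := by
    simp [f, ENNReal.coe_toNNReal (measure_ne_top μ _)]
  have hg (s : Finset E) : ((∑ z ∈ s, g z : ℝ≥0) : ℝ≥0∞) = ν s := by
    simp [g, ENNReal.coe_toNNReal (measure_ne_top ν _)]
  have hall : HallCondition (· ≤ ·) f g := fun S => by
    rw [← ENNReal.coe_le_coe, hf, hg]
    refine (measure_mono fun x hx => mem_relImage.2 ⟨x, hx, le_rfl⟩).trans (h _ ?_)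
    intro z z' hzz' hz
    obtain ⟨x, hx, hxz⟩ := mem_relImage.1 hz
    exact mem_relImage.2 ⟨x, hx, hxz.trans hzz'⟩
  have hsum : ∑ x, f x = ∑ z, g z := by
    rw [← ENNReal.coe_inj, hf, hg, coe_univ, measure_univ, measure_univ]
  obtain ⟨K, hK⟩ := hall.exists_isTransportPlan hsum
  exact stochDom_of_isTransportPlan hK

end StochasticDomination

lemma StochDom.measure_inter_le_of_cond {Ω E : Type*} [MeasurableSpace Ω] [MeasurableSpace E]
    [Countable E] [MeasurableSingletonClass E] [Preorder E] {ρ : Measure Ω} [IsFiniteMeasure ρ]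
    {H : Set Ω} (hH : MeasurableSet H) (hH0 : ρ H ≠ 0) {X Y : Ω → E} (hX : Measurable X)
    (hY : Measurable Y) (h : StochDom ((ρ[|H]).map X) ((ρ[|H]).map Y)) {G : Set E}
    (hG : IsUpperSet G) : ρ (H ∩ X ⁻¹' G) ≤ ρ (H ∩ Y ⁻¹' G) := by
  have := h.measure_le_of_isUpperSet hG
  rwa [Measure.map_apply hX .of_discrete, Measure.map_apply hY .of_discrete, cond_apply hH,
    cond_apply hH, ENNReal.mul_le_mul_iff_right (ENNReal.inv_ne_zero.2 (measure_ne_top ρ H))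
    (ENNReal.inv_ne_top.2 hH0)] at this

lemma measure_eq_sum_preimage_singleton_inter {Ω ι : Type*} [MeasurableSpace Ω] [Fintype ι]
    (ρ : Measure Ω) {W : Ω → ι} (hW : ∀ i, MeasurableSet (W ⁻¹' {i})) (S : Set Ω) :
    ρ S = ∑ i, ρ (W ⁻¹' {i} ∩ S) := by
  rw [← Measure.restrict_apply_univ, ← Set.preimage_univ (f := W), ← Finset.coe_univ,
    ← sum_measure_preimage_singleton _ fun i _ => hW i]
  simp_rw [Measure.restrict_apply (hW _)]

lemma exists_forall_subset_of_isUpperSet {ι M : Type*} [LinearOrder M] {s : Finset ι}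
    (hs : s.Nonempty) {G : ι → Set M} (hG : ∀ i, IsUpperSet (G i)) :
    ∃ i ∈ s, ∀ j ∈ s, G j ⊆ G i := by
  obtain ⟨i, hi, hmin⟩ := s.exists_min_image (fun i => (⟨G i, hG i⟩ : UpperSet M)) hs
  exact ⟨i, hi, fun j hj => UpperSet.coe_subset_coe.2 (hmin j hj)⟩

section Lifts

variable {A B M : Type*}

def restrictOffFibre (π : A → B) (b : B) (x : A → M) : {c : A // π c ≠ b} → M := fun c => x c.1

def IsLiftConfig [Zero M] (π : A → B) (x : A → M) : Prop :=
  ∀ a a', π a = π a' → x a ≠ 0 → x a' ≠ 0 → a = a'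

def place [DecidableEq A] [Zero M] (π : A → B) (r : B → A) (ξ : B → M) : A → M :=
  fun a => if r (π a) = a then ξ (π a) else 0

/-- `place π 𝔰 (fibreMax π x)` is the flattened configuration `Y'` of condition `B_μ^ρ`. -/
def fibreMax [Fintype A] [DecidableEq B] [SemilatticeSup M] [OrderBot M] (π : A → B) (x : A → M)
    (b : B) : M :=
  ({c | π c = b} : Finset A).sup x

variable [DecidableEq A] {π : A → B} {r : B → A}

section Place

variable [Zero M] [Preorder M]

lemma place_mono : Monotone (place (M := M) π r) := fun ξ ξ' h a => by
  unfold place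
  split_ifs
  exacts [h _, le_rfl]

lemma place_comp_le [IsBotZeroClass M] (z : A → M) :
    place π r (z ∘ r) ≤ z := fun a => by
  unfold place
  split_ifs with h
  exacts [le_of_eq (congrArg z h), zero_le]

end Place

lemma place_comp_self [Zero M] (hr : Function.RightInverse r π) (ξ : B → M) :
    place π r ξ ∘ r = ξ :=
  funext fun b => by simp [place, hr b]

lemma exists_place_fibreMax_eq [Fintype A] [DecidableEq B] [LinearOrder M] [OrderBot M] [Zero M]
    [IsBotZeroClass M] {𝔰 : B → A} (hsec : Function.RightInverse 𝔰 π) {y : A → M}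
    (hy : IsLiftConfig π y) :
    ∃ r, Function.RightInverse r π ∧ place π r (fibreMax π y) = y := by
  choose r hr_mem hr_eq using fun b =>
    exists_mem_eq_sup ({c | π c = b} : Finset A) ⟨𝔰 b, by simp [hsec b]⟩ y
  have hr : Function.RightInverse r π := fun b => (mem_filter.1 (hr_mem b)).2
  refine ⟨r, hr, funext fun a => ?_⟩
  unfold place
  split_ifs with h
  · rw [fibreMax, hr_eq, h]
  · have hle : y a ≤ y (r (π a)) := hr_eq (π a) ▸ le_sup (by simp)
    by_contra ha
    exact h (hy _ _ (hr (π a)) (fun h0 => ha (le_antisymm (h0 ▸ hle) zero_le).symm) (Ne.symm ha))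

end Lifts

section Hybrid

variable {A B M : Type*} [DecidableEq B] {π : A → B} {𝔰 : B → A}

lemma comp_piecewise_eq_update {r : B → A} (hr : Function.RightInverse r π)
    (hsec : Function.RightInverse 𝔰 π) {T : Finset B} {b : B} (hb : b ∉ T) {z z₀ : A → M}
    (hz : restrictOffFibre π b z = restrictOffFibre π b z₀) :
    z ∘ T.piecewise r 𝔰 = Function.update (z₀ ∘ T.piecewise r 𝔰) b (z (𝔰 b)) := by
  funext b'
  rcases eq_or_ne b' b with rfl | hb'
  · simp [piecewise_eq_of_notMem _ _ _ hb]
  · rw [Function.update_of_ne hb', Function.comp_apply, Function.comp_apply]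
    have hπ : π (T.piecewise r 𝔰 b') ≠ b := by
      by_cases hbT : b' ∈ T
      · rwa [piecewise_eq_of_mem _ _ _ hbT, hr b']
      · rwa [piecewise_eq_of_notMem _ _ _ hbT, hsec b']
    exact congrFun hz ⟨_, hπ⟩

variable [DecidableEq A] [Zero M]

/-- Interpolates between the event of condition `B_μ^ρ` (`T = ∅`) and a subset of `U`
(`T = univ`). -/
def hybridSet (π : A → B) (𝔰 : B → A) (U : Set (A → M)) (T : Finset B) : Set (A → M) :=
  {z | ∃ r, Function.RightInverse r π ∧ place π r (z ∘ T.piecewise r 𝔰) ∈ U}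

variable [Preorder M] {U : Set (A → M)}

lemma IsUpperSet.hybridSet (hU : IsUpperSet U) (T : Finset B) :
    IsUpperSet (hybridSet π 𝔰 U T) := fun _ _ hzz' ⟨r, hr, hz⟩ =>
  ⟨r, hr, hU (place_mono fun _ => hzz' _) hz⟩

lemma hybridSet_univ_subset [Fintype B] [IsBotZeroClass M] (hU : IsUpperSet U) :
    hybridSet π 𝔰 U univ ⊆ U := fun z ⟨r, _, hz⟩ => by
  rw [piecewise_univ] at hz
  exact hU (place_comp_le z) hz

end Hybrid

section FibreSwitch

variable {A B M : Type*} [Fintype A] [DecidableEq A] [Fintype B] [DecidableEq B] [LinearOrder M]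
  [Zero M] [Fintype M] [MeasurableSpace M] [MeasurableSingletonClass M] {π : A → B} {𝔰 : B → A}

lemma measure_hybridSet_le_insert {ρ : Measure (A → M)} [IsFiniteMeasure ρ]
    (hsec : Function.RightInverse 𝔰 π) {U : Set (A → M)} (hU : IsUpperSet U) {T : Finset B}
    {b : B} (hb : b ∉ T)
    (hA : ∀ a, π a = b → ∀ w, ρ (restrictOffFibre π b ⁻¹' {w}) ≠ 0 →
      StochDom ((ρ[|restrictOffFibre π b ⁻¹' {w}]).map fun x => x (𝔰 b))
        ((ρ[|restrictOffFibre π b ⁻¹' {w}]).map fun x => x a)) :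
    ρ (hybridSet π 𝔰 U T) ≤ ρ (hybridSet π 𝔰 U (insert b T)) := by
  classical
  set W := restrictOffFibre (M := M) π b
  rw [measure_eq_sum_preimage_singleton_inter ρ (W := W) (fun _ => .of_discrete),
    measure_eq_sum_preimage_singleton_inter ρ (W := W) (fun _ => .of_discrete)]
  refine sum_le_sum fun w _ => ?_
  rcases eq_or_ne (ρ (W ⁻¹' {w})) 0 with hw | hw
  · simp [measure_mono_null Set.inter_subset_left hw]
  -- On `{W = w}`, membership only depends on the value read in fibre `b`, through upper sets
  -- that are nested in `r`; condition A moves the reading from `𝔰 b` to the best position.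
  obtain ⟨z₀, hz₀⟩ := nonempty_of_measure_ne_zero hw
  set slice : (B → A) → Set M :=
    fun r => {s | place π r (Function.update (z₀ ∘ T.piecewise r 𝔰) b s) ∈ U}
  have hslice r : IsUpperSet (slice r) := fun s s' hss' hs =>
    hU (place_mono (Function.update_mono hss')) hs
  obtain ⟨r₀, hr₀, hmax⟩ := exists_forall_subset_of_isUpperSet
    (s := ({r | Function.RightInverse r π} : Finset (B → A))) ⟨𝔰, by simpa using hsec⟩ hslice
  simp only [mem_filter, mem_univ, true_and] at hr₀ hmax
  calc ρ (W ⁻¹' {w} ∩ hybridSet π 𝔰 U T)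
      ≤ ρ (W ⁻¹' {w} ∩ (fun x => x (𝔰 b)) ⁻¹' slice r₀) := by
        refine measure_mono fun z ⟨hzw, r, hr, hzU⟩ => ⟨hzw, hmax r hr ?_⟩
        rwa [comp_piecewise_eq_update hr hsec hb ((hzw : W z = w).trans (hz₀ : W z₀ = w).symm)]
          at hzU
    _ ≤ ρ (W ⁻¹' {w} ∩ (fun x => x (r₀ b)) ⁻¹' slice r₀) :=
        (hA (r₀ b) (hr₀ b) w hw).measure_inter_le_of_cond .of_discrete hw
          (measurable_pi_apply _) (measurable_pi_apply _) (hslice r₀)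
    _ ≤ ρ (W ⁻¹' {w} ∩ hybridSet π 𝔰 U (insert b T)) := by
        refine measure_mono fun z ⟨hzw, hz⟩ => ⟨hzw, r₀, hr₀, ?_⟩
        rwa [piecewise_insert, Function.comp_update, comp_piecewise_eq_update hr₀ hsec hb
          ((hzw : W z = w).trans (hz₀ : W z₀ = w).symm), Function.update_idem]

end FibreSwitch

section UpperSets

variable {A B M : Type*} [Fintype A] [DecidableEq A] [DecidableEq B] [LinearOrder M] [OrderBot M]
  [Zero M] [IsBotZeroClass M] {π : A → B} {𝔰 : B → A}

lemma place_fibreMax_mem_hybridSet_empty (hsec : Function.RightInverse 𝔰 π) {U : Set (A → M)}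
    {y : A → M} (hyU : y ∈ U) (hy : IsLiftConfig π y) :
    place π 𝔰 (fibreMax π y) ∈ hybridSet π 𝔰 U ∅ := by
  obtain ⟨r, hr, hry⟩ := exists_place_fibreMax_eq hsec hy
  exact ⟨r, hr, by rwa [piecewise_empty, place_comp_self hsec, hry]⟩

variable [Fintype B] [Fintype M] [MeasurableSpace M] [MeasurableSingletonClass M]

theorem measure_le_of_isUpperSet {μ ρ : Measure (A → M)} [IsProbabilityMeasure μ]
    [IsFiniteMeasure ρ] (hsec : Function.RightInverse 𝔰 π)
    (hlift : μ {x | IsLiftConfig π x} = 1)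
    (hA : ∀ b a, π a = b → ∀ w, ρ (restrictOffFibre π b ⁻¹' {w}) ≠ 0 →
      StochDom ((ρ[|restrictOffFibre π b ⁻¹' {w}]).map fun x => x (𝔰 b))
        ((ρ[|restrictOffFibre π b ⁻¹' {w}]).map fun x => x a))
    (hB : StochDom (μ.map fun x => place π 𝔰 (fibreMax π x)) ρ) {U : Set (A → M)}
    (hU : IsUpperSet U) : μ U ≤ ρ U := by
  have hmono (T : Finset B) : ρ (hybridSet π 𝔰 U ∅) ≤ ρ (hybridSet π 𝔰 U T) := by
    induction T using Finset.induction_on with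
    | empty => exact le_rfl
    | insert b T hb ih => exact ih.trans (measure_hybridSet_le_insert hsec hU hb (hA b))
  calc μ U = μ (U ∩ {x | IsLiftConfig π x}) :=
        (measure_inter_conull ((prob_compl_eq_zero_iff .of_discrete).2 hlift)).symm
    _ ≤ μ ((fun x => place π 𝔰 (fibreMax π x)) ⁻¹' hybridSet π 𝔰 U ∅) :=
        measure_mono fun y ⟨hyU, hy⟩ => place_fibreMax_mem_hybridSet_empty hsec hyU hy
    _ = (μ.map fun x => place π 𝔰 (fibreMax π x)) (hybridSet π 𝔰 U ∅) :=
        (Measure.map_apply .of_discrete .of_discrete).symm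
    _ ≤ ρ (hybridSet π 𝔰 U ∅) := hB.measure_le_of_isUpperSet (hU.hybridSet ∅)
    _ ≤ ρ (hybridSet π 𝔰 U univ) := hmono univ
    _ ≤ ρ U := measure_mono (hybridSet_univ_subset hU)

end UpperSets

theorem stmt5_general (N : ℕ)
    {A B : Type*} [Fintype A] [DecidableEq A] [Fintype B] [DecidableEq B]
    (π : A → B) (𝔰 : B → A) (hsec : ∀ b, π (𝔰 b) = b)
    (μ ρ : Measure (A → Fin (N + 1)))
    [IsProbabilityMeasure μ] [IsProbabilityMeasure ρ]
    (hlift : μ {x | ∀ a a' : A, π a = π a' → x a ≠ 0 → x a' ≠ 0 → a = a'} = 1)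
    -- Condition `A_ρ` : conditionally on any positive-probability event depending only on
    -- the coordinates outside the fibre of `b`, the law of `Z_{𝔰 b}` is dominated by that
    -- of `Z_a`, for every `a` in the fibre of `b`.
    (hA : ∀ b : B, ∀ a : A, π a = b →
      ∀ H : Set ({c : A // π c ≠ b} → Fin (N + 1)),
        (ρ ((fun x (c : {c : A // π c ≠ b}) => x c.1) ⁻¹' H) ≠ 0) →
        StochDom
          ((ρ[|(fun x (c : {c : A // π c ≠ b}) => x c.1) ⁻¹' H]).map fun x => x (𝔰 b))
          ((ρ[|(fun x (c : {c : A // π c ≠ b}) => x c.1) ⁻¹' H]).map fun x => x a))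
    -- Condition `B_μ^ρ` : the `𝔰`-flattened version of `μ` is dominated by `ρ`.
    (hB : StochDom
      (μ.map fun x a =>
        if 𝔰 (π a) = a then (Finset.univ.filter fun c => π c = π a).sup x else 0)
      ρ) :
    StochDom μ ρ :=
  stochDom_of_forall_isUpperSet fun _ hU =>
    measure_le_of_isUpperSet hsec hlift (fun b a ha w hw => hA b a ha {w} hw) hB hU

/-- **Main theorem, finite case.** If `μ` is a `π`-lift and conditions `A_ρ` and `B_μ^ρ`
hold for a section `𝔰` of `π`, then `μ` is stochastically dominated by `ρ`. -/
theorem stmt5 (N : ℕ) (hN : 1 ≤ N)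
    {A B : Type*} [Fintype A] [Nonempty A] [DecidableEq A] [Fintype B] [Nonempty B]
    [DecidableEq B]
    (π : A → B) (hπ : Function.Surjective π)
    (𝔰 : B → A) (hsec : ∀ b, π (𝔰 b) = b)
    (μ ρ : Measure (A → Fin (N + 1)))
    [IsProbabilityMeasure μ] [IsProbabilityMeasure ρ]
    (hlift : μ {x | ∀ a a' : A, π a = π a' → x a ≠ 0 → x a' ≠ 0 → a = a'} = 1)
    -- Condition `A_ρ` : conditionally on any positive-probability event depending only on
    -- the coordinates outside the fibre of `b`, the law of `Z_{𝔰 b}` is dominated by that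
    -- of `Z_a`, for every `a` in the fibre of `b`.
    (hA : ∀ b : B, ∀ a : A, π a = b →
      ∀ H : Set ({c : A // π c ≠ b} → Fin (N + 1)),
        (ρ ((fun x (c : {c : A // π c ≠ b}) => x c.1) ⁻¹' H) ≠ 0) →
        StochDom
          ((ρ[|(fun x (c : {c : A // π c ≠ b}) => x c.1) ⁻¹' H]).map fun x => x (𝔰 b))
          ((ρ[|(fun x (c : {c : A // π c ≠ b}) => x c.1) ⁻¹' H]).map fun x => x a))
    -- Condition `B_μ^ρ` : the `𝔰`-flattened version of `μ` is dominated by `ρ`.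
    (hB : StochDom
      (μ.map fun x a =>
        if 𝔰 (π a) = a then (Finset.univ.filter fun c => π c = π a).sup x else 0)
      ρ) :
    StochDom μ ρ :=
  stmt5_general N π 𝔰 hsec μ ρ hlift hA hB
end

section
/- Let C be a finite set, let p_i ∈ [0,1] for each i ∈ C, and let P = ⊗_{i∈C} Bernoulli(p_i) on {0,1}^C. Let E₁ and E₂ be increasing subsets of {0,1}^C. Then P(E₁ ∘ E₂) ≤ P(E₁) · P(E₂), where E₁ ∘ E₂ denotes the disjoint occurrence of E₁ and E₂ (the BK inequality for increasing events). -/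
open MeasureTheory ProbabilityTheory

/-- Bernoulli measure of parameter `p` on `Bool`. -/
noncomputable def bern (p : ENNReal) : Measure Bool :=
  p • Measure.dirac true + (1 - p) • Measure.dirac false

/-- Disjoint occurrence of two events in `{0,1}^C`. -/
def DisjOcc {C : Type*} (E₁ E₂ : Set (C → Bool)) : Set (C → Bool) :=
  {ω | ∃ P₁ P₂ : Set C, Disjoint P₁ P₂ ∧
    (∀ ω', (∀ i ∈ P₁, ω' i = ω i) → ω' ∈ E₁) ∧
    (∀ ω', (∀ i ∈ P₂, ω' i = ω i) → ω' ∈ E₂)}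

/-- An increasing (upward closed) event. -/
def IncreasingEvent {C : Type*} (E : Set (C → Bool)) : Prop :=
  ∀ ω ∈ E, ∀ ω' : C → Bool, ω ≤ ω' → ω' ∈ E

/-!
Induction on the number of coordinates. Fix a coordinate `i` and write `Eᵇ` for the slice of `E`
at `ω i = b`, so that `P(E) = q₀ P(E⁰) + q₁ P(E¹)`. Since `i` belongs to at most one of two
disjoint witness sets, the `false`-slice of `E₁ ∘ E₂` lies in `E₁⁰ ∘ E₂⁰` and the `true`-slice in
`(E₁¹ ∘ E₂⁰) ∪ (E₁⁰ ∘ E₂¹)`. As slices of increasing events satisfy `E⁰ ⊆ E¹`, the induction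
hypothesis bounds `x = P((E₁ ∘ E₂)⁰)` by `a₀b₀`, `u = P((E₁ ∘ E₂)¹)` by `a₁b₁`, and, through
inclusion–exclusion for the union, `x + u` by `a₁b₀ + a₀b₁`; these three bounds give the
inequality for `C`.
-/

open scoped ENNReal

section ProdMass

variable {C : Type*} [Fintype C] [DecidableEq C]

noncomputable def prodMass (w : C → Bool → ℝ≥0∞) (E : Set (C → Bool)) : ℝ≥0∞ :=
  ∑ ω, E.indicator (fun ω => ∏ i, w i (ω i)) ω

variable (w : C → Bool → ℝ≥0∞)

lemma prodMass_mono {E F : Set (C → Bool)} (h : E ⊆ F) : prodMass w E ≤ prodMass w F :=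
  Finset.sum_le_sum fun ω _ => Set.indicator_le_indicator_of_subset h (fun _ => zero_le) ω

lemma prodMass_union_add_inter (E F : Set (C → Bool)) :
    prodMass w (E ∪ F) + prodMass w (E ∩ F) = prodMass w E + prodMass w F := by
  simp only [prodMass, ← Finset.sum_add_distrib]
  exact Finset.sum_congr rfl fun ω _ => Set.indicator_union_add_inter_apply _ E F ω

lemma prodMass_inter_of_isEmpty [IsEmpty C] (E F : Set (C → Bool)) :
    prodMass w (E ∩ F) = prodMass w E * prodMass w F := by
  simp only [prodMass, Fintype.sum_unique, Finset.univ_eq_empty, Finset.prod_empty]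
  rw [← Set.inter_indicator_mul, mul_one]

lemma measure_pi_eq_prodMass (μ : C → Measure Bool) [∀ i, SigmaFinite (μ i)]
    (E : Set (C → Bool)) : Measure.pi μ E = prodMass (fun i b => μ i {b}) E := by
  classical
  rw [prodMass, ← Set.coe_toFinset E, ← sum_measure_singleton,
    ← Finset.sum_indicator_subset _ (Finset.subset_univ _)]
  simp

end ProdMass

section Slice

variable {C : Type*} [DecidableEq C]

def slice (i : C) (b : Bool) (E : Set (C → Bool)) : Set ({j // j ≠ i} → Bool) :=
  {τ | (Equiv.funSplitAt i Bool).symm (b, τ) ∈ E}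

lemma slice_mono_of_increasing {E : Set (C → Bool)} (hE : IncreasingEvent E) (i : C)
    {b b' : Bool} (hb : b ≤ b') {τ τ' : {j // j ≠ i} → Bool} (hτ : τ ≤ τ')
    (h : τ ∈ slice i b E) : τ' ∈ slice i b' E := by
  refine hE _ h _ fun j => ?_
  by_cases hj : j = i
  · subst hj; simpa using hb
  · simpa [hj] using hτ ⟨j, hj⟩

lemma increasingEvent_slice {E : Set (C → Bool)} (hE : IncreasingEvent E) (i : C) (b : Bool) :
    IncreasingEvent (slice i b E) :=
  fun _ h _ hτ => slice_mono_of_increasing hE i le_rfl hτ h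

lemma slice_false_subset_slice_true {E : Set (C → Bool)} (hE : IncreasingEvent E) (i : C) :
    slice i false E ⊆ slice i true E :=
  fun _ h => slice_mono_of_increasing hE i (Bool.false_le _) le_rfl h

variable [Fintype C]

lemma prod_funSplitAt_symm (w : C → Bool → ℝ≥0∞) (i : C) (b : Bool)
    (τ : {j // j ≠ i} → Bool) :
    ∏ j, w j ((Equiv.funSplitAt i Bool).symm (b, τ) j) =
      w i b * ∏ j : {j // j ≠ i}, w j (τ j) := by
  rw [Fintype.prod_eq_mul_prod_subtype_ne _ i]
  simp only [Equiv.funSplitAt_symm_apply, dite_true]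
  exact congrArg _ (Finset.prod_congr rfl fun j _ => by simp [j.2])

lemma sum_indicator_funSplitAt_symm (w : C → Bool → ℝ≥0∞) (i : C) (E : Set (C → Bool))
    (b : Bool) :
    ∑ τ, E.indicator (fun ω => ∏ j, w j (ω j)) ((Equiv.funSplitAt i Bool).symm (b, τ)) =
      w i b * prodMass (fun j : {j // j ≠ i} => w j) (slice i b E) := by
  rw [prodMass, Finset.mul_sum]
  refine Finset.sum_congr rfl fun τ _ => ?_
  by_cases h : τ ∈ slice i b E
  · rw [Set.indicator_of_mem h, Set.indicator_of_mem (show _ ∈ E from h), prod_funSplitAt_symm]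
  · rw [Set.indicator_of_notMem h, Set.indicator_of_notMem (show _ ∉ E from h), mul_zero]

lemma prodMass_eq_add_slice (w : C → Bool → ℝ≥0∞) (i : C) (E : Set (C → Bool)) :
    prodMass w E = w i false * prodMass (fun j : {j // j ≠ i} => w j) (slice i false E)
      + w i true * prodMass (fun j : {j // j ≠ i} => w j) (slice i true E) := by
  rw [prodMass, ← (Equiv.funSplitAt i Bool).symm.sum_comp, Fintype.sum_prod_type,
    Fintype.sum_bool, add_comm, sum_indicator_funSplitAt_symm, sum_indicator_funSplitAt_symm]

end Slice

section DisjOcc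

variable {C : Type*}

def OccursOn (E : Set (C → Bool)) (P : Set C) (ω : C → Bool) : Prop :=
  ∀ ω', (∀ i ∈ P, ω' i = ω i) → ω' ∈ E

lemma disjOcc_mono {E₁ E₂ F₁ F₂ : Set (C → Bool)} (h₁ : E₁ ⊆ F₁) (h₂ : E₂ ⊆ F₂) :
    DisjOcc E₁ E₂ ⊆ DisjOcc F₁ F₂ := by
  rintro ω ⟨P₁, P₂, hd, hA, hB⟩
  exact ⟨P₁, P₂, hd, fun ω' h => h₁ (hA ω' h), fun ω' h => h₂ (hB ω' h)⟩

lemma disjOcc_subset_inter {E₁ E₂ : Set (C → Bool)} : DisjOcc E₁ E₂ ⊆ E₁ ∩ E₂ := by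
  rintro ω ⟨P₁, P₂, _, hA, hB⟩
  exact ⟨hA ω fun _ _ => rfl, hB ω fun _ _ => rfl⟩

variable [DecidableEq C]

lemma occursOn_slice {E : Set (C → Bool)} {P : Set C} {i : C} {b c : Bool}
    {τ : {j // j ≠ i} → Bool} (h : OccursOn E P ((Equiv.funSplitAt i Bool).symm (b, τ)))
    (hc : i ∈ P → c = b) : OccursOn (slice i c E) (Subtype.val ⁻¹' P) τ := by
  refine fun τ' hτ' => h _ fun j hj => ?_
  by_cases hji : j = i
  · subst hji; simpa using hc hj
  · simpa [hji] using hτ' ⟨j, hji⟩ hj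

/-- The coordinate `i` lies in at most one of the two witness sets; the other event then
already occurs on the `false`-slice. -/
lemma slice_disjOcc_subset (i : C) (b : Bool) (E₁ E₂ : Set (C → Bool)) :
    slice i b (DisjOcc E₁ E₂) ⊆
      DisjOcc (slice i b E₁) (slice i false E₂) ∪ DisjOcc (slice i false E₁) (slice i b E₂) := by
  rintro τ ⟨P₁, P₂, hd, h₁, h₂⟩
  have hd' := hd.preimage (Subtype.val : {j // j ≠ i} → C)
  by_cases hi : i ∈ P₂
  · have hi₁ : i ∉ P₁ := Set.disjoint_right.mp hd hi
    exact Or.inr ⟨_, _, hd', occursOn_slice h₁ (absurd · hi₁), occursOn_slice h₂ fun _ => rfl⟩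
  · exact Or.inl ⟨_, _, hd', occursOn_slice h₁ fun _ => rfl, occursOn_slice h₂ (absurd · hi)⟩

end DisjOcc

/-- Expanding with `q₀ + q₁ = 1`, the right side minus the left side is
`q₀² (a₀b₀ - x) + q₁² (a₁b₁ - u) + q₀q₁ (a₁b₀ + a₀b₁ - x - u)`. -/
lemma ENNReal.add_mul_le_mul_of_cross {q₀ q₁ a₀ a₁ b₀ b₁ x u : ℝ≥0∞} (hq : q₀ + q₁ = 1)
    (hx : x ≤ a₀ * b₀) (hu : u ≤ a₁ * b₁) (hxu : x + u ≤ a₁ * b₀ + a₀ * b₁) :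
    q₀ * x + q₁ * u ≤ (q₀ * a₀ + q₁ * a₁) * (q₀ * b₀ + q₁ * b₁) :=
  calc q₀ * x + q₁ * u
      = (q₀ + q₁) * (q₀ * x + q₁ * u) := by rw [hq, one_mul]
    _ = q₀ * q₀ * x + q₁ * q₁ * u + q₀ * q₁ * (x + u) := by ring
    _ ≤ q₀ * q₀ * (a₀ * b₀) + q₁ * q₁ * (a₁ * b₁) + q₀ * q₁ * (a₁ * b₀ + a₀ * b₁) := by gcongr
    _ = (q₀ * a₀ + q₁ * a₁) * (q₀ * b₀ + q₁ * b₁) := by ring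

section BK

variable {C : Type*} [Fintype C] [DecidableEq C]

lemma prodMass_disjOcc_le_of_slices (w : C → Bool → ℝ≥0∞) (hw : ∀ i, w i false + w i true = 1)
    (i : C) {E₁ E₂ : Set (C → Bool)} (h₁ : IncreasingEvent E₁) (h₂ : IncreasingEvent E₂)
    (hslice : ∀ b b',
      prodMass (fun j : {j // j ≠ i} => w j) (DisjOcc (slice i b E₁) (slice i b' E₂)) ≤
        prodMass (fun j : {j // j ≠ i} => w j) (slice i b E₁) *
        prodMass (fun j : {j // j ≠ i} => w j) (slice i b' E₂)) :
    prodMass w (DisjOcc E₁ E₂) ≤ prodMass w E₁ * prodMass w E₂ := by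
  set w' : {j // j ≠ i} → Bool → ℝ≥0∞ := fun j => w j
  set R := DisjOcc (slice i false E₁) (slice i false E₂)
  set S := DisjOcc (slice i true E₁) (slice i false E₂)
  set T := DisjOcc (slice i false E₁) (slice i true E₂)
  have hF : slice i false (DisjOcc E₁ E₂) ⊆ R := fun τ hτ =>
    (slice_disjOcc_subset i false E₁ E₂ hτ).elim id id
  have hT : slice i true (DisjOcc E₁ E₂) ⊆ S ∪ T := slice_disjOcc_subset i true E₁ E₂
  have hR : R ⊆ S ∩ T := Set.subset_inter
    (disjOcc_mono (slice_false_subset_slice_true h₁ i) subset_rfl)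
    (disjOcc_mono subset_rfl (slice_false_subset_slice_true h₂ i))
  have hST : S ∪ T ⊆ DisjOcc (slice i true E₁) (slice i true E₂) := Set.union_subset
    (disjOcc_mono subset_rfl (slice_false_subset_slice_true h₂ i))
    (disjOcc_mono (slice_false_subset_slice_true h₁ i) subset_rfl)
  rw [prodMass_eq_add_slice w i (DisjOcc E₁ E₂), prodMass_eq_add_slice w i E₁,
    prodMass_eq_add_slice w i E₂]
  refine ENNReal.add_mul_le_mul_of_cross (hw i)
    ((prodMass_mono w' hF).trans (hslice false false))
    ((prodMass_mono w' (hT.trans hST)).trans (hslice true true)) ?_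
  calc prodMass w' (slice i false (DisjOcc E₁ E₂)) + prodMass w' (slice i true (DisjOcc E₁ E₂))
      ≤ prodMass w' (S ∩ T) + prodMass w' (S ∪ T) :=
        add_le_add (prodMass_mono w' (hF.trans hR)) (prodMass_mono w' hT)
    _ = prodMass w' S + prodMass w' T := by rw [add_comm, prodMass_union_add_inter]
    _ ≤ _ := add_le_add (hslice true false) (hslice false true)

theorem prodMass_disjOcc_le (w : C → Bool → ℝ≥0∞) (hw : ∀ i, w i false + w i true = 1)
    {E₁ E₂ : Set (C → Bool)} (h₁ : IncreasingEvent E₁) (h₂ : IncreasingEvent E₂) :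
    prodMass w (DisjOcc E₁ E₂) ≤ prodMass w E₁ * prodMass w E₂ := by
  induction hn : Fintype.card C generalizing C with
  | zero =>
    have : IsEmpty C := Fintype.card_eq_zero_iff.mp hn
    exact (prodMass_mono w disjOcc_subset_inter).trans (prodMass_inter_of_isEmpty w E₁ E₂).le
  | succ n ih =>
    obtain ⟨i⟩ : Nonempty C := Fintype.card_pos_iff.mp (by omega)
    have hcard : Fintype.card {j // j ≠ i} = n := by
      rw [Fintype.card_subtype_compl, Fintype.card_subtype_eq]; omega
    exact prodMass_disjOcc_le_of_slices w hw i h₁ h₂ fun b b' =>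
      ih (fun j : {j // j ≠ i} => w j) (fun j => hw j) (increasingEvent_slice h₁ i b)
        (increasingEvent_slice h₂ i b') hcard

end BK

theorem measure_pi_disjOcc_le {C : Type*} [Fintype C] (μ : C → Measure Bool)
    [∀ i, IsProbabilityMeasure (μ i)] {E₁ E₂ : Set (C → Bool)}
    (h₁ : IncreasingEvent E₁) (h₂ : IncreasingEvent E₂) :
    Measure.pi μ (DisjOcc E₁ E₂) ≤ Measure.pi μ E₁ * Measure.pi μ E₂ := by
  classical
  simp only [measure_pi_eq_prodMass]
  refine prodMass_disjOcc_le _ (fun i => ?_) h₁ h₂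
  rw [← measure_union (by simp) (measurableSet_singleton _), ← measure_univ (μ := μ i)]
  congr 1
  ext b; cases b <;> simp

lemma isProbabilityMeasure_bern {p : ℝ≥0∞} (hp : p ≤ 1) : IsProbabilityMeasure (bern p) :=
  ⟨by simp [bern, add_tsub_cancel_of_le hp]⟩

/-- **The BK inequality for increasing events.** -/
theorem stmt8 {C : Type*} [Fintype C]
    (p : C → ENNReal) (hp : ∀ i, p i ≤ 1)
    (E₁ E₂ : Set (C → Bool))
    (h₁ : IncreasingEvent E₁) (h₂ : IncreasingEvent E₂) :
    Measure.pi (fun i => bern (p i)) (DisjOcc E₁ E₂) ≤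
      Measure.pi (fun i => bern (p i)) E₁ * Measure.pi (fun i => bern (p i)) E₂ := by
  have := fun i => isProbabilityMeasure_bern (hp i)
  exact measure_pi_disjOcc_le _ h₁ h₂
end
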